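/- Let X be a Kan complex. Then its décalage Dec X is also a Kan complex, and the natural map ∂ : Dec X → X (given in degree n by the last face operator X_{n+1} → X_n) is a Kan fibration. -/

import Mathlib

open CategoryTheory Simplicial Opposite

namespace SimplexCategory

/-- The "add a top element" endofunctor of the simplex category, on objects. -/
def shiftObj (x : SimplexCategory) : SimplexCategory := mk (x.len + 1)

/-- The "add a top element" endofunctor, on morphisms: extend a monotone map by
sending the new top element to the new top element. -/
def shiftMap {x y : SimplexCategory} (f : x ⟶ y) : shiftObj x ⟶ shiftObj y :=
  Hom.mk
    { toFun := fun i =>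
        if h : (i : ℕ) < x.len + 1 then (f.toOrderHom ⟨(i : ℕ), h⟩).castSucc
        else Fin.last (y.len + 1)
      monotone' := by
        intro i j hij
        have hij' : (i : ℕ) ≤ (j : ℕ) := hij
        dsimp only
        change (if h : (i : ℕ) < x.len + 1 then (f.toOrderHom ⟨(i : ℕ), h⟩).castSucc
            else Fin.last (y.len + 1) : Fin (y.len + 2)) ≤
          (if h : (j : ℕ) < x.len + 1 then (f.toOrderHom ⟨(j : ℕ), h⟩).castSucc
            else Fin.last (y.len + 1) : Fin (y.len + 2))
        by_cases hi : (i : ℕ) < x.len + 1 <;> by_cases hj : (j : ℕ) < x.len + 1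
        · rw [dif_pos hi, dif_pos hj]
          exact Fin.castSucc_le_castSucc_iff.mpr
            (f.toOrderHom.monotone (Fin.mk_le_mk.mpr hij'))
        · rw [dif_pos hi, dif_neg hj]
          exact Fin.le_last _
        · omega
        · rw [dif_neg hi, dif_neg hj] }

lemma shiftMap_apply_lt {x y : SimplexCategory} (f : x ⟶ y)
    (i : Fin ((shiftObj x).len + 1)) (h : (i : ℕ) < x.len + 1) :
    (((shiftMap f).toOrderHom i : Fin ((shiftObj y).len + 1)) : ℕ)
      = ((f.toOrderHom ⟨(i : ℕ), h⟩ : Fin (y.len + 1)) : ℕ) := by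
  show ((if h : (i : ℕ) < x.len + 1 then (f.toOrderHom ⟨(i : ℕ), h⟩).castSucc
        else Fin.last (y.len + 1) : Fin (y.len + 2)) : ℕ) = _
  rw [dif_pos h, Fin.val_castSucc]

lemma shiftMap_apply_last {x y : SimplexCategory} (f : x ⟶ y)
    (i : Fin ((shiftObj x).len + 1)) (h : ¬ (i : ℕ) < x.len + 1) :
    (((shiftMap f).toOrderHom i : Fin ((shiftObj y).len + 1)) : ℕ) = y.len + 1 := by
  show ((if h : (i : ℕ) < x.len + 1 then (f.toOrderHom ⟨(i : ℕ), h⟩).castSucc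
        else Fin.last (y.len + 1) : Fin (y.len + 2)) : ℕ) = _
  rw [dif_neg h, Fin.val_last]

/-- The "add a new top element" endofunctor of the simplex category. -/
def shiftFunctor : SimplexCategory ⥤ SimplexCategory where
  obj := shiftObj
  map := shiftMap
  map_id x := by
    ext i
    by_cases h : (i : ℕ) < x.len + 1
    · rw [shiftMap_apply_lt _ i h]
      simp
    · rw [shiftMap_apply_last _ i h]
      have := i.isLt
      simp only [shiftObj, len_mk] at this ⊢
      simp only [id_toOrderHom, OrderHom.id_coe, id_eq]
      change (i : ℕ) < x.len + 1 + 1 at this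
      change x.len + 1 = (i : ℕ)
      omega
  map_comp {x y z} f g := by
    ext i
    rw [comp_toOrderHom]
    simp only [OrderHom.comp_coe, Function.comp_apply]
    by_cases h : (i : ℕ) < x.len + 1
    · have h1 := shiftMap_apply_lt f i h
      have h' : (((shiftMap f).toOrderHom i : Fin ((shiftObj y).len + 1)) : ℕ) < y.len + 1 := by
        rw [h1]; exact (f.toOrderHom ⟨(i : ℕ), h⟩).isLt
      rw [shiftMap_apply_lt (f ≫ g) i h, shiftMap_apply_lt g _ h', comp_toOrderHom]
      simp only [OrderHom.comp_coe, Function.comp_apply]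
      have h2 : (⟨(((shiftMap f).toOrderHom i : Fin ((shiftObj y).len + 1)) : ℕ), h'⟩ :
          Fin (y.len + 1)) = f.toOrderHom ⟨(i : ℕ), h⟩ := Fin.ext h1
      rw [h2]
    · rw [shiftMap_apply_last (f ≫ g) i h,
        shiftMap_apply_last g _ (by rw [shiftMap_apply_last f i h]; omega)]

/-- The last face inclusion `x ⟶ shiftObj x`. -/
def lastFaceIncl (x : SimplexCategory) : x ⟶ shiftObj x :=
  Hom.mk ⟨Fin.castSucc, fun _ _ h => Fin.castSucc_le_castSucc_iff.mpr h⟩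

lemma lastFaceIncl_apply (x : SimplexCategory) (i : Fin (x.len + 1)) :
    ((lastFaceIncl x).toOrderHom i : ℕ) = (i : ℕ) := rfl

end SimplexCategory

namespace SSet

/-- The décalage of a simplicial set:  `(Dec X)ₙ = Xₙ₊₁`, forgetting the last face
and degeneracy operators. -/
def Dec (X : SSet.{0}) : SSet.{0} := SimplexCategory.shiftFunctor.op ⋙ X

/-- The natural "last face" map `∂ : Dec X ⟶ X`. -/
def decAug (X : SSet.{0}) : Dec X ⟶ X where
  app x := X.map (SimplexCategory.lastFaceIncl x.unop).op
  naturality {a b} u := by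
    dsimp [Dec]
    erw [← X.map_comp, ← X.map_comp]
    congr 1
    erw [show (SimplexCategory.shiftFunctor.map u.unop).op ≫
        (SimplexCategory.lastFaceIncl b.unop).op
        = (SimplexCategory.lastFaceIncl b.unop ≫ SimplexCategory.shiftFunctor.map u.unop).op
        from rfl,
      show (SimplexCategory.lastFaceIncl a.unop).op ≫ u
        = (u.unop ≫ SimplexCategory.lastFaceIncl a.unop).op from rfl]
    congr 1
    ext i
    erw [SimplexCategory.comp_toOrderHom, SimplexCategory.comp_toOrderHom]
    simp only [OrderHom.comp_coe, Function.comp_apply]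
    have hlt : (((SimplexCategory.lastFaceIncl b.unop).toOrderHom i : _) : ℕ)
        < b.unop.len + 1 := by
      rw [SimplexCategory.lastFaceIncl_apply]; exact i.isLt
    refine (SimplexCategory.shiftMap_apply_lt u.unop _ hlt).trans ?_
    simp only [SimplexCategory.lastFaceIncl_apply, Fin.eta]
    exact (SimplexCategory.lastFaceIncl_apply a.unop _).symm

end SSet

namespace SSet

/-- A simplicial set is a Kan complex if every horn `Λ[n, k] → X` for `n ≥ 1`,
`0 ≤ k ≤ n`, extends along the horn inclusion `Λ[n, k] ↪ Δ[n]`. -/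
def IsKanComplex (S : SSet.{0}) : Prop :=
  ∀ ⦃n : ℕ⦄ ⦃i : Fin (n + 2)⦄ (σ₀ : (Λ[n + 1, i] : SSet.{0}) ⟶ S),
    ∃ σ : Δ[n + 1] ⟶ S, σ₀ = Λ[n + 1, i].ι ≫ σ

/-- A map of simplicial sets is a Kan fibration if it has the right lifting property
with respect to all horn inclusions `Λ[n, k] ↪ Δ[n]` for `n ≥ 1`, `0 ≤ k ≤ n`. -/
def IsKanFibration {S T : SSet.{0}} (f : S ⟶ T) : Prop :=
  ∀ ⦃n : ℕ⦄ ⦃i : Fin (n + 2)⦄, HasLiftingProperty Λ[n + 1, i].ι f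

end SSet

/-!
Since `Δ[n + 1] ⋆ Δ[0] = Δ[n + 2]`, a lifting problem of `Λ[n + 1, i] ↪ Δ[n + 1]`
against `∂ : Dec X ⟶ X` is the same thing as a horn `Λ[n + 2, i] ⟶ X`: an `n`-simplex of
`Dec X` is an `(n + 1)`-simplex of `X`, so the horn in `Dec X` supplies the faces `j ≠ i` of
index `≤ n + 1`, and the `(n + 1)`-simplex of `X` below supplies the last face. A filler of
this horn in `X` is a lift. `Dec X` is then Kan because it fibres over the Kan complex `X`.
-/

namespace SimplexCategory

lemma shiftMap_δ {n : ℕ} (a : Fin (n + 2)) : shiftMap (δ a) = δ a.castSucc := by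
  ext k : 3
  change Fin (n + 2) at k
  induction k using Fin.lastCases with
  | last =>
    have h : (shiftMap (δ a)).toOrderHom (Fin.last (n + 1)) = Fin.last (n + 2) :=
      Fin.ext (shiftMap_apply_last (δ a) _ (by simp))
    change _ = a.castSucc.succAbove (Fin.last (n + 1))
    rw [h, Fin.succAbove_of_le_castSucc _ _ (Fin.castSucc_le_castSucc_iff.2 (Fin.le_last a)),
      Fin.succ_last]
  | cast k =>
    exact (Fin.ext (shiftMap_apply_lt _ k.castSucc k.isLt)).trans
      (Fin.castSucc_succAbove_castSucc ..).symm

lemma lastFaceIncl_eq_δ_last (n : ℕ) : lastFaceIncl ⦋n⦌ = δ (Fin.last (n + 1)) := by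
  ext k : 3
  exact (Fin.succAbove_last_apply k).symm

end SimplexCategory

namespace SSet

variable {X : SSet.{0}}

def decHomEquiv {m : ℕ} : (Δ[m] ⟶ Dec X) ≃ (Δ[m + 1] ⟶ X) :=
  yonedaEquiv.trans (yonedaEquiv (X := X) (n := ⦋m + 1⦌)).symm

lemma stdSimplex_map_shiftMap_comp_decHomEquiv {p q : ℕ} (φ : ⦋p⦌ ⟶ ⦋q⦌)
    (g : Δ[q] ⟶ Dec X) :
    SSet.stdSimplex.map (SimplexCategory.shiftMap φ) ≫ decHomEquiv g =
      decHomEquiv (SSet.stdSimplex.map φ ≫ g) :=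
  (yonedaEquiv_symm_naturality_left (X := X) (SimplexCategory.shiftMap φ)
      (yonedaEquiv (X := Dec X) g)).trans
    (congrArg yonedaEquiv.symm (yonedaEquiv_naturality φ g))

lemma δ_castSucc_comp_decHomEquiv {m : ℕ} (a : Fin (m + 2)) (g : Δ[m + 1] ⟶ Dec X) :
    stdSimplex.δ a.castSucc ≫ decHomEquiv g = decHomEquiv (stdSimplex.δ a ≫ g) := by
  have h := stdSimplex_map_shiftMap_comp_decHomEquiv (SimplexCategory.δ a) g
  rwa [SimplexCategory.shiftMap_δ] at h

lemma comp_decAug {m : ℕ} (g : Δ[m] ⟶ Dec X) :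
    g ≫ decAug X = stdSimplex.δ (Fin.last (m + 1)) ≫ decHomEquiv g := by
  have h : g ≫ decAug X =
      SSet.stdSimplex.map (SimplexCategory.lastFaceIncl ⦋m⦌) ≫ decHomEquiv g :=
    (yonedaEquiv.symm_apply_apply _).symm.trans
      (yonedaEquiv_symm_naturality_left (X := X) (SimplexCategory.lastFaceIncl ⦋m⦌)
        (yonedaEquiv (X := Dec X) g)).symm
  rwa [SimplexCategory.lastFaceIncl_eq_δ_last] at h

variable {n : ℕ} {i : Fin (n + 2)}

def decHornFaces (u : (Λ[n + 1, i] : SSet) ⟶ Dec X) (v : Δ[n + 1] ⟶ X) :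
    ∀ j : Fin (n + 3), j ≠ i.castSucc → (Δ[n + 1] ⟶ X) :=
  Fin.lastCases (fun _ => v)
    (fun j hj => decHomEquiv (horn.ι i j (fun h => hj (congrArg Fin.castSucc h)) ≫ u))

lemma decHornFaces_last (u : (Λ[n + 1, i] : SSet) ⟶ Dec X) (v : Δ[n + 1] ⟶ X)
    (h : Fin.last (n + 2) ≠ i.castSucc) :
    decHornFaces u v (Fin.last (n + 2)) h = v := by
  rw [decHornFaces, Fin.lastCases_last]

lemma decHornFaces_castSucc (u : (Λ[n + 1, i] : SSet) ⟶ Dec X) (v : Δ[n + 1] ⟶ X)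
    (j : Fin (n + 2)) (h : j.castSucc ≠ i.castSucc) :
    decHornFaces u v j.castSucc h =
      decHomEquiv (horn.ι i j (fun h' => h (congrArg Fin.castSucc h')) ≫ u) := by
  rw [decHornFaces, Fin.lastCases_castSucc]

lemma isCompatible_decHornFaces {u : (Λ[n + 1, i] : SSet) ⟶ Dec X} {v : Δ[n + 1] ⟶ X}
    (w : u ≫ decAug X = Λ[n + 1, i].ι ≫ v) : horn.IsCompatible (decHornFaces u v) := by
  rw [horn.isCompatible_iff]
  intro j k hj hk hjk
  obtain ⟨j, rfl⟩ := j.eq_castSucc_of_ne_last (Fin.ne_last_of_lt hjk)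
  induction k using Fin.lastCases with
  | last =>
    simp only [decHornFaces_last, decHornFaces_castSucc, Fin.pred_last, Fin.castPred_castSucc]
    rw [← comp_decAug, Category.assoc, w, horn.ι_ι_assoc]
  | cast k =>
    have hjk' : j < k := Fin.castSucc_lt_castSucc_iff.1 hjk
    obtain _ | n := n
    · -- `Λ[1, i]` has only one face.
      simp only [ne_eq, Fin.ext_iff, Fin.lt_def, Fin.val_castSucc] at hj hk hjk'
      omega
    obtain ⟨j, rfl⟩ := j.eq_castSucc_of_ne_last (Fin.ne_last_of_lt hjk')
    have hfaces : stdSimplex.{0}.δ (k.pred (Fin.ne_zero_of_lt hjk')) ≫ horn.ι i j.castSucc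
        (fun h => hj (congrArg Fin.castSucc h)) =
          stdSimplex.δ j ≫ horn.ι i k (fun h => hk (congrArg Fin.castSucc h)) := by
      rw [← cancel_mono (Subcomplex.ι _), Category.assoc, Category.assoc, horn.ι_ι, horn.ι_ι]
      exact (CosimplicialObject.δ_comp_δ' _ hjk').symm
    have hpred : k.castSucc.pred (Fin.ne_zero_of_lt hjk) =
        (k.pred (Fin.ne_zero_of_lt hjk')).castSucc :=
      (Fin.castSucc_pred_eq_pred_castSucc _).symm
    simp only [decHornFaces_castSucc, Fin.castPred_castSucc, hpred, δ_castSucc_comp_decHomEquiv,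
      reassoc_of% hfaces]

lemma IsKanFibration.isKanComplex {S T : SSet.{0}} {f : S ⟶ T} (hf : IsKanFibration f)
    (hT : IsKanComplex T) : IsKanComplex S := by
  intro n i σ₀
  have := hf (n := n) (i := i)
  obtain ⟨τ, hτ⟩ := hT (σ₀ ≫ f)
  have sq : CommSq σ₀ Λ[n + 1, i].ι f τ := ⟨hτ⟩
  exact ⟨sq.lift, sq.fac_left.symm⟩

lemma decAug_isKanFibration (hX : IsKanComplex X) : IsKanFibration (decAug X) := by
  intro n i
  refine ⟨fun {u v} sq => ?_⟩
  obtain ⟨σ, hσ⟩ := hX (isCompatible_decHornFaces sq.w).desc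
  have hσ_faces (j : Fin (n + 3)) (hj : j ≠ i.castSucc) :
      stdSimplex.δ j ≫ σ = decHornFaces u v j hj := by
    rw [← horn.ι_ι _ j hj, Category.assoc, ← hσ, horn.IsCompatible.ι_desc]
  refine ⟨⟨{ l := decHomEquiv.symm σ, fac_left := ?_, fac_right := ?_ }⟩⟩
  · refine horn.hom_ext' fun j hj => decHomEquiv.injective ?_
    rw [horn.ι_ι_assoc, ← δ_castSucc_comp_decHomEquiv, Equiv.apply_symm_apply,
      hσ_faces _ (fun h => hj (Fin.castSucc_injective _ h)), decHornFaces_castSucc]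
  · rw [comp_decAug, Equiv.apply_symm_apply, hσ_faces _ (Fin.castSucc_lt_last i).ne',
      decHornFaces_last]

end SSet

/-- If `X` is a Kan complex, then its décalage `Dec X` is a Kan complex and the
natural last-face map `∂ : Dec X ⟶ X` is a Kan fibration. -/
theorem dec_isKanComplex_and_decAug_isKanFibration (X : SSet.{0}) (hX : SSet.IsKanComplex X) :
    SSet.IsKanComplex (SSet.Dec X) ∧ SSet.IsKanFibration (SSet.decAug X) :=
  ⟨(SSet.decAug_isKanFibration hX).isKanComplex hX, SSet.decAug_isKanFibration hX⟩
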